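/- For any ε > 0 and any integer n > 1, consider the n × (n+1) game with u₁(i,j) = iε/n for j ≤ n, u₁(i,n+1) = 1 − (n−i)ε/n, u₂(i,j) = (1+1/n)/2 for i ≠ j ≤ n, u₂(i,i) = 0 for i ≤ n, u₂(i,n+1) = 1/2. For any SIS partition 𝒮 with |𝒮| < n (so some SIS contains two distinct rows i < i'), every correlated profile with no undetectable beneficial deviations gives the row player expected utility at most ε. -/
import Mathlib


open Finset

/-- Row payoffs of the game of Proposition `closetofull`:
u₁(i,j) = iε/n for j ≤ n, u₁(i,n+1) = 1 − (n−i)ε/n (rows indexed 1..n). -/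
noncomputable def gU1 (n : ℕ) (ε : ℝ) : Fin n → Fin (n+1) → ℝ := fun i j =>
  if (j : ℕ) < n then ((i : ℕ) + 1) * ε / n
  else 1 - ((n : ℝ) - ((i : ℕ) + 1)) * ε / n

/-- Column payoffs: u₂(i,j) = (1+1/n)/2 for i ≠ j ≤ n, u₂(i,i) = 0,
u₂(i,n+1) = 1/2. -/
noncomputable def gU2 (n : ℕ) : Fin n → Fin (n+1) → ℝ := fun i j =>
  if (j : ℕ) < n then (if (j : ℕ) = (i : ℕ) then 0 else (1 + 1/(n : ℝ)) / 2)
  else 1/2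

/-- if some SIS contains two distinct rows i < i' (i.e. the SIS
labeling is not injective), then every correlated profile with no undetectable
beneficial deviations gives the row player expected utility at most ε. -/
theorem close_to_full_commitment_upper_bound
    {ι : Type*} (n : ℕ) (hn : 1 < n) (ε : ℝ) (hε : 0 < ε)
    (sis : Fin n → ι)
    (hni : ∃ i i' : Fin n, i < i' ∧ sis i = sis i')
    (σ : Fin n → Fin (n+1) → ℝ)
    (hpos : ∀ r c, 0 ≤ σ r c) (hsum : ∑ r, ∑ c, σ r c = 1)
    (hcol : ∀ c c', 0 ≤ ∑ r, σ r c * (gU2 n r c - gU2 n r c'))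
    (hrow : ∀ r r', sis r = sis r' →
        0 ≤ ∑ c, σ r c * (gU1 n ε r c - gU1 n ε r' c)) :
    ∑ r, ∑ c, σ r c * gU1 n ε r c ≤ ε := by
  obtain ⟨i, i', hii, hsis⟩ := hni
  have hnpos : (0:ℝ) < n := by exact_mod_cast Nat.lt_of_lt_of_le Nat.zero_lt_one hn.le
  -- Step 1: row i has zero mass
  have h1 := hrow i i' hsis
  have hconst : ∀ c : Fin (n+1), gU1 n ε i c - gU1 n ε i' c
      = (((i:ℕ):ℝ) - ((i':ℕ):ℝ)) * ε / n := by
    intro c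
    unfold gU1
    by_cases h : (c:ℕ) < n <;> simp [h] <;> ring
  have hsum1 : ∑ c, σ i c * (gU1 n ε i c - gU1 n ε i' c)
      = (∑ c, σ i c) * ((((i:ℕ):ℝ) - ((i':ℕ):ℝ)) * ε / n) := by
    simp_rw [hconst]; rw [Finset.sum_mul]
  have hlt : ((i:ℕ):ℝ) < ((i':ℕ):ℝ) := by exact_mod_cast hii
  have hneg : (((i:ℕ):ℝ) - ((i':ℕ):ℝ)) * ε / n < 0 :=
    div_neg_of_neg_of_pos (mul_neg_of_neg_of_pos (by linarith) hε) hnpos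
  have hs : ∑ c, σ i c = 0 := by
    rcases lt_or_eq_of_le (Finset.sum_nonneg fun c _ => hpos i c) with h | h
    · nlinarith [hsum1, h1]
    · exact h.symm
  have hrowzero : ∀ c, σ i c = 0 := fun c =>
    (Finset.sum_eq_zero_iff_of_nonneg (fun c _ => hpos i c)).mp hs c (mem_univ c)
  -- Step 2: last column has zero mass
  set L : Fin (n+1) := Fin.last n with hL
  have hLn : ¬ ((L:ℕ) < n) := by simp [hL]
  have hiC : ((i.castSucc : Fin (n+1)) : ℕ) = (i:ℕ) := rfl
  have h2 := hcol L i.castSucc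
  have hterm : ∀ r : Fin n, σ r L * (gU2 n r L - gU2 n r i.castSucc)
      = if (i:ℕ) = (r:ℕ) then 0 else σ r L * (-(1/(2*(n:ℝ)))) := by
    intro r
    unfold gU2
    rw [hiC]
    by_cases h : (i:ℕ) = (r:ℕ)
    · have : r = i := by
        apply Fin.ext; omega
      simp [h, hLn, i.isLt, this, hrowzero]
    · rw [if_neg hLn, if_pos i.isLt, if_neg h, if_neg h]
      congr 1
      have hne : (n:ℝ) ≠ 0 := ne_of_gt hnpos
      field_simp
      ring
  have hcolzero : ∀ r : Fin n, σ r L = 0 := by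
    have hle : ∀ r ∈ (univ : Finset (Fin n)),
        σ r L * (gU2 n r L - gU2 n r i.castSucc) ≤ 0 := by
      intro r _
      rw [hterm r]
      by_cases h : (i:ℕ) = (r:ℕ)
      · simp [h]
      · simp only [if_neg h]
        have : -(1/(2*(n:ℝ))) ≤ 0 := neg_nonpos.mpr (by positivity)
        exact mul_nonpos_of_nonneg_of_nonpos (hpos r L) this
    have hsum0 : ∑ r, σ r L * (gU2 n r L - gU2 n r i.castSucc) = 0 :=
      le_antisymm (Finset.sum_nonpos hle) h2
    have hall := (Finset.sum_eq_zero_iff_of_nonpos hle).mp hsum0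
    intro r
    have h0 := hall r (mem_univ r)
    rw [hterm r] at h0
    by_cases h : (i:ℕ) = (r:ℕ)
    · have : r = i := by apply Fin.ext; omega
      rw [this]; exact hrowzero L
    · rw [if_neg h] at h0
      have hn2 : -(1/(2*(n:ℝ))) ≠ 0 := by
        have : (0:ℝ) < 1/(2*(n:ℝ)) := by positivity
        linarith
      exact (mul_eq_zero.mp h0).resolve_right hn2
  -- Step 3: final bound
  have hbound : ∀ r : Fin n, ∀ c : Fin (n+1), σ r c * gU1 n ε r c ≤ σ r c * ε := by
    intro r c
    by_cases h : (c:ℕ) < n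
    · apply mul_le_mul_of_nonneg_left _ (hpos r c)
      unfold gU1
      rw [if_pos h]
      rw [div_le_iff₀ hnpos]
      have : ((r:ℕ):ℝ) + 1 ≤ (n:ℝ) := by exact_mod_cast r.isLt
      nlinarith
    · have hcL : c = L := by apply Fin.ext; simp [hL]; omega
      rw [hcL, hcolzero r]
      simp
  calc ∑ r, ∑ c, σ r c * gU1 n ε r c ≤ ∑ r, ∑ c, σ r c * ε := by
        apply Finset.sum_le_sum; intro r _
        apply Finset.sum_le_sum; intro c _
        exact hbound r c
    _ = (∑ r, ∑ c, σ r c) * ε := by rw [Finset.sum_mul]; congr 1; ext r; rw [Finset.sum_mul]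
    _ = ε := by rw [hsum, one_mul]
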